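/- Define u(ε) = −1/4 + log ε − ε²/8 and v(ε) = (9/(2π²))·( C³·C₁/3 − C²·C₂·ε/2 + π·ε³/36 )², where C = √(2π/√3), C₁ = (2 + 3·artanh(1/2))/6, C₂ = 1/√3. Then for every ε ∈ (0, √(8π/(3√3))], u(ε) + v(ε) ≤ u(2) + v(2), and u(2) + v(2) = log 2 − 3/4 + (1/162)·(3^{1/4}·√(2π)·(2 + 3·artanh(1/2)) − 12)². -/

import Mathlib

open MeasureTheory Real Filter Set

noncomputable section


/-- The inverse hyperbolic tangent. -/
noncomputable def artanh (x : ℝ) : ℝ := (1/2) * Real.log ((1 + x) / (1 - x))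

/-- The constant `C = √(2π/√3)`. -/
noncomputable def CC : ℝ := Real.sqrt (2 * π / Real.sqrt 3)

/-- The constant `C₁ = (2 + 3·artanh(1/2))/6`. -/
noncomputable def C1 : ℝ := (2 + 3 * _root_.artanh (1/2)) / 6

/-- The constant `C₂ = 1/√3`. -/
noncomputable def C2 : ℝ := 1 / Real.sqrt 3

/-- `u(ε) = −1/4 + log ε − ε²/8`. -/
noncomputable def uF (ε : ℝ) : ℝ := -1/4 + Real.log ε - ε^2/8

/-- `v(ε) = (9/(2π²))·(C³C₁/3 − C²C₂ε/2 + πε³/36)²`. -/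
noncomputable def vF (ε : ℝ) : ℝ :=
  (9 / (2 * π^2)) * (CC^3 * C1 / 3 - CC^2 * C2 * ε / 2 + π * ε^3 / 36) ^ 2



/-- quadratic log bound -/
lemma log_quad {y : ℝ} (hy : 0 < y) (hy1 : y ≤ 1) :
    Real.log y ≤ y - 1 - (1-y)^2/2 := by
  set f : ℝ → ℝ := fun x => x - 1 - (1-x)^2/2 - Real.log x with hf
  have hd : ∀ x ∈ Set.Ioi (0:ℝ), HasDerivAt f (2 - x - x⁻¹) x := by
    intro x hx
    have hx0 : x ≠ 0 := ne_of_gt hx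
    have h1 : HasDerivAt (fun x:ℝ => (1-x)^2/2) (x-1) x := by
      have h2 : HasDerivAt (fun x:ℝ => 1-x) (-1) x := by
        exact (hasDerivAt_id' x).const_sub (1:ℝ)
      have : HasDerivAt (fun x:ℝ => (1-x)^2/2) _ x := (h2.pow 2).div_const 2
      convert this using 1
      ring
    have h3 : HasDerivAt f (1 - (x-1) - x⁻¹) x :=
      (((hasDerivAt_id x).sub_const 1).sub h1).sub (Real.hasDerivAt_log hx0)
    convert h3 using 1
    ring
  have anti : AntitoneOn f (Set.Ioi 0) := by
    apply antitoneOn_of_deriv_nonpos (convex_Ioi 0)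
    · exact fun x hx => ((hd x hx).differentiableAt).continuousAt.continuousWithinAt
    · rw [interior_Ioi]
      exact fun x hx => ((hd x hx).differentiableAt).differentiableWithinAt
    · rw [interior_Ioi]
      intro x hx
      rw [(hd x hx).deriv]
      have hx' : (0:ℝ) < x := hx
      have hxi : x * x⁻¹ = 1 := mul_inv_cancel₀ (ne_of_gt hx')
      nlinarith [sq_nonneg (x-1)]
  have := anti (Set.mem_Ioi.2 hy) (Set.mem_Ioi.2 one_pos) hy1
  simp only [hf, Real.log_one] at this
  nlinarith [this]

lemma log3_lb : (1.098:ℝ) < Real.log 3 := by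
  have h2 : Real.exp 0.006125 < 1/0.993875 := by
    have h := Real.add_one_lt_exp (x := (-0.006125:ℝ)) (by norm_num)
    rw [Real.exp_neg] at h
    have hp : (0:ℝ) < Real.exp 0.006125 := Real.exp_pos _
    have hip : (0:ℝ) < (Real.exp 0.006125)⁻¹ := by positivity
    have hxi : Real.exp 0.006125 * (Real.exp 0.006125)⁻¹ = 1 :=
      mul_inv_cancel₀ (ne_of_gt hp)
    nlinarith
  have h3 : Real.exp 0.098 = Real.exp 0.006125 ^ (16:ℕ) := by
    rw [← Real.exp_nat_mul]; norm_num
  have h4 : Real.exp 0.098 < (1/0.993875:ℝ)^(16:ℕ) := by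
    rw [h3]
    exact pow_lt_pow_left₀ h2 (Real.exp_pos _).le (by norm_num)
  have h5 : Real.exp 1.098 = Real.exp 1 * Real.exp 0.098 := by
    rw [← Real.exp_add]; norm_num
  have h6 : Real.exp 1.098 < 3 := by
    rw [h5]
    calc Real.exp 1 * Real.exp 0.098 < 2.7182818286 * (1/0.993875:ℝ)^(16:ℕ) := by
          apply mul_lt_mul'' Real.exp_one_lt_d9 h4 (Real.exp_pos _).le (Real.exp_pos _).le
      _ < 3 := by norm_num
  have h7 : Real.exp 1.098 < Real.exp (Real.log 3) := by
    rwa [Real.exp_log (by norm_num : (0:ℝ) < 3)]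
  exact Real.exp_lt_exp.mp h7

lemma log3_ub : Real.log 3 < 1.0992 := by
  rw [Real.log_lt_iff_lt_exp (by norm_num : (0:ℝ) < 3)]
  have h1 : ((1:ℝ)+0.0031)^(32:ℕ) ≤ Real.exp 0.0992 := by
    have h2 : ((1:ℝ)+0.0031) ≤ Real.exp 0.0031 := by
      have := Real.add_one_le_exp (0.0031:ℝ); linarith
    have h3 : Real.exp 0.0992 = Real.exp 0.0031 ^ (32:ℕ) := by
      rw [← Real.exp_nat_mul]; norm_num
    rw [h3]
    exact pow_le_pow_left₀ (by norm_num) h2 32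
  have h5 : Real.exp 1.0992 = Real.exp 1 * Real.exp 0.0992 := by
    rw [← Real.exp_add]; norm_num
  have h6 : (2.7182818283:ℝ) * ((1:ℝ)+0.0031)^(32:ℕ) ≤ Real.exp 1 * Real.exp 0.0992 := by
    apply mul_le_mul Real.exp_one_gt_d9.le h1 (by positivity) (Real.exp_pos _).le
  rw [h5]
  calc (3:ℝ) < 2.7182818283 * ((1:ℝ)+0.0031)^(32:ℕ) := by norm_num
    _ ≤ _ := h6

set_option maxHeartbeats 4000000 in
/-- On `(0, √(8π/(3√3))]` the function `u + v` is maximized at `ε = 2`, where it equals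
`log 2 − 3/4 + (1/162)·(3^{1/4}·√(2π)·(2 + 3·artanh(1/2)) − 12)²`. -/
theorem uv_max_at_two :
    (∀ ε ∈ Set.Ioc (0:ℝ) (Real.sqrt (8 * π / (3 * Real.sqrt 3))),
      uF ε + vF ε ≤ uF 2 + vF 2) ∧
    uF 2 + vF 2 = Real.log 2 - 3/4 +
      (1/162) * ((3:ℝ) ^ ((1:ℝ)/4) * Real.sqrt (2*π) * (2 + 3 * _root_.artanh (1/2)) - 12) ^ 2 := by
  have hπ0 : (0:ℝ) < π := Real.pi_pos
  have hπl : 3.141592 < π := Real.pi_gt_d6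
  have hπu : π < 3.141593 := Real.pi_lt_d6
  have hs0 : (0:ℝ) < Real.sqrt 3 := Real.sqrt_pos.mpr (by norm_num)
  have hs2 : Real.sqrt 3 ^ 2 = 3 := Real.sq_sqrt (by norm_num)
  have hslb : 1.7320508 ≤ Real.sqrt 3 := by nlinarith
  have hsub : Real.sqrt 3 ≤ 1.7320509 := by nlinarith
  have hC0 : 0 ≤ CC := Real.sqrt_nonneg _
  have hCsq : CC^2 = 2 * π / Real.sqrt 3 := Real.sq_sqrt (by positivity)
  have hCsq' : CC^2 * Real.sqrt 3 = 2 * π := by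
    rw [hCsq]; field_simp
  have hClb : 1.9046 ≤ CC := by
    nlinarith [sq_nonneg (CC - 1.9046), mul_nonneg (sq_nonneg CC) (sub_nonneg.2 hsub)]
  have hCub : CC ≤ 1.90463 := by
    nlinarith [sq_nonneg (CC - 1.90463), mul_nonneg (sq_nonneg CC) (sub_nonneg.2 hslb)]
  have hart : _root_.artanh (1/2) = Real.log 3 / 2 := by
    unfold _root_.artanh
    norm_num
    ring
  have hC1 : C1 = (4 + 3 * Real.log 3) / 12 := by
    rw [C1, hart]; ring
  have hC1lb : 0.6078 ≤ C1 := by rw [hC1]; nlinarith [log3_lb]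
  have hC1ub : C1 ≤ 0.60814 := by rw [hC1]; nlinarith [log3_ub]
  have hCC2C2 : CC^2 * C2 = 2 * π / 3 := by
    rw [hCsq, C2]
    rw [div_mul_div_comm, mul_one]
    rw [show Real.sqrt 3 * Real.sqrt 3 = 3 by nlinarith [hs2]]
  set A : ℝ := CC^3 * C1 / 3 with hA
  -- bounds on g2 = A - 4π/9
  have hkey1 : 2 * Real.sqrt 3 / 3 ≤ CC * C1 := by
    nlinarith [mul_le_mul hClb hC1lb (by norm_num) (by linarith)]
  have hkey2 : CC * C1 ≤ 25 * Real.sqrt 3 / 36 := by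
    nlinarith [mul_le_mul hCub hC1ub (by linarith) (by norm_num)]
  have hg2a : 4 * π / 9 ≤ A := by
    rw [hA]
    nlinarith [mul_nonneg (sq_nonneg CC) (sub_nonneg.2 hkey1), hCsq']
  have hg2b : A ≤ 25 * π / 54 := by
    rw [hA]
    nlinarith [mul_nonneg (sq_nonneg CC) (sub_nonneg.2 hkey2), hCsq']
  -- rewriting vF
  have hinner : ∀ x : ℝ, CC^3 * C1 / 3 - CC^2 * C2 * x / 2 + π * x^3 / 36
      = A - π * x / 3 + π * x^3 / 36 := by
    intro x
    rw [hA]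
    linear_combination (-(x/2)) * hCC2C2
  have hrw : ∀ x : ℝ, vF x = (9 / (2 * π^2)) * (A - π * x / 3 + π * x^3 / 36) ^ 2 := by
    intro x
    rw [vF, hinner x]
  have hvdiff : ∀ x : ℝ, vF x - vF 2 =
      ((9/(2*π^2)) * ((π/36) * (x-2)^2)) * ((x+4) * (2*(A - 4*π/9) + (π/36)*(x-2)^2*(x+4))) := by
    intro x
    rw [hrw x, hrw 2]
    ring
  constructor
  · rintro ε ⟨hε0, hεM⟩
    have hM : Real.sqrt (8 * π / (3 * Real.sqrt 3)) ≤ 2.2 := by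
      rw [show (2.2:ℝ) = Real.sqrt (2.2^2) by rw [Real.sqrt_sq (by norm_num)]]
      apply Real.sqrt_le_sqrt
      rw [div_le_iff₀ (by positivity)]
      nlinarith
    have hε22 : ε ≤ 2.2 := le_trans hεM hM
    have hld : Real.log ε = Real.log 2 + Real.log (ε/2) := by
      rw [Real.log_div (ne_of_gt hε0) (by norm_num)]; ring
    rcases le_or_gt ε 2 with h2 | h2
    · -- case ε ≤ 2
      have hq := log_quad (show (0:ℝ) < ε/2 by linarith) (by linarith)
      have hu : (ε-2)^2/4 ≤ uF 2 - uF ε := by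
        unfold uF
        rw [hld]
        nlinarith [hq]
      have hkey : (ε+4) * (2*(A - 4*π/9) + (π/36)*(ε-2)^2*(ε+4)) ≤ 2*π := by
        have hq1 : 0 ≤ (2-ε)*(ε+4) := by nlinarith
        have hq2 : (2-ε)*(ε+4) ≤ 8 := by nlinarith
        have hq3 : (2-ε)^2*(ε+4)^2 ≤ 64 := by nlinarith
        nlinarith [hg2a, hg2b, hπ0, mul_le_mul_of_nonneg_left hq3
          (show (0:ℝ) ≤ π/36 by positivity),
          mul_le_mul (show (ε:ℝ)+4 ≤ 6 by linarith) hg2b (by linarith) (by norm_num)]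
      have hv : vF ε - vF 2 ≤ (ε-2)^2/4 := by
        rw [hvdiff ε]
        calc ((9/(2*π^2)) * ((π/36) * (ε-2)^2)) * ((ε+4) * (2*(A - 4*π/9) + (π/36)*(ε-2)^2*(ε+4)))
            ≤ ((9/(2*π^2)) * ((π/36) * (ε-2)^2)) * (2*π) :=
              mul_le_mul_of_nonneg_left hkey (by positivity)
          _ = (ε-2)^2/4 := by field_simp; ring
      linarith
    · -- case 2 < ε
      have hq := Real.log_le_sub_one_of_pos (show (0:ℝ) < ε/2 by linarith)
      have hu : (ε-2)^2/8 ≤ uF 2 - uF ε := by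
        unfold uF
        rw [hld]
        nlinarith [hq]
      have hkey : (ε+4) * (2*(A - 4*π/9) + (π/36)*(ε-2)^2*(ε+4)) ≤ π := by
        have d1 : (ε-2)^2 ≤ 0.04 := by nlinarith
        have d2 : (ε+4)^2 ≤ 38.44 := by nlinarith
        have e1 : (ε-2)^2*(ε+4)^2 ≤ 1.5376 := by nlinarith [d1, d2, sq_nonneg (ε-2), sq_nonneg (ε+4)]
        have e2 : (A - 4*π/9)*(ε+4) ≤ (π/54)*6.2 :=
          mul_le_mul (by linarith) (by linarith) (by linarith) (by positivity)
        nlinarith [e1, e2, hπ0, mul_le_mul_of_nonneg_left e1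
          (show (0:ℝ) ≤ π/36 by positivity)]
      have hv : vF ε - vF 2 ≤ (ε-2)^2/8 := by
        rw [hvdiff ε]
        calc ((9/(2*π^2)) * ((π/36) * (ε-2)^2)) * ((ε+4) * (2*(A - 4*π/9) + (π/36)*(ε-2)^2*(ε+4)))
            ≤ ((9/(2*π^2)) * ((π/36) * (ε-2)^2)) * π :=
              mul_le_mul_of_nonneg_left hkey (by positivity)
          _ = (ε-2)^2/8 := by field_simp; ring
      linarith
  · -- the value at 2
    set S : ℝ := Real.sqrt (2*π) with hSdef
    have hS0 : 0 ≤ S := Real.sqrt_nonneg _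
    have hS2 : S^2 = 2*π := Real.sq_sqrt (by positivity)
    set t : ℝ := (3:ℝ) ^ ((1:ℝ)/4) with ht
    have ht0 : 0 ≤ t := Real.rpow_nonneg (by norm_num) _
    have ht2 : t^2 = Real.sqrt 3 := by
      rw [Real.sqrt_eq_rpow, ht, ← Real.rpow_natCast ((3:ℝ)^((1:ℝ)/4)) 2,
        ← Real.rpow_mul (by norm_num : (0:ℝ) ≤ 3)]
      norm_num
    have hkeyt : Real.sqrt 3 * CC = S * t := by
      have h1 : (Real.sqrt 3 * CC)^2 = (S * t)^2 := by
        rw [mul_pow, mul_pow, hCsq, ht2, hS2, hs2]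
        field_simp
        linear_combination (-1) * hs2
      have h2 : 0 ≤ Real.sqrt 3 * CC := by positivity
      have h3 : 0 ≤ S * t := by positivity
      calc Real.sqrt 3 * CC = Real.sqrt ((Real.sqrt 3 * CC)^2) := (Real.sqrt_sq h2).symm
        _ = Real.sqrt ((S * t)^2) := by rw [h1]
        _ = S * t := Real.sqrt_sq h3
    have hAeq : A = (2 * π * C1 / 9) * (S * t) := by
      rw [hA]
      linear_combination (Real.sqrt 3 * CC * C1/9) * hCsq' + (2*π*C1/9) * hkeyt
        + (-(CC^3*C1/9)) * hs2
    have h6C1 : 2 + 3 * _root_.artanh (1/2) = 6 * C1 := by rw [C1]; ring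
    have hval : vF 2 = (1/162) * (t * S * (2 + 3 * _root_.artanh (1/2)) - 12) ^ 2 := by
      rw [hrw 2, h6C1]
      rw [show A - π * 2 / 3 + π * 2^3 / 36 = A - 4*π/9 by ring, hAeq]
      field_simp
      ring
    have hu2 : uF 2 = Real.log 2 - 3/4 := by
      unfold uF; norm_num; ring
    rw [hu2, hval]
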